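/- Let n be a positive integer, λ an infinite cardinal, and τ a feebly compact shift-continuous T₁ topology on I_λ^n. Then for every α ∈ I_λ^n and every open neighbourhood U of α there exist finitely many α₁,…,α_k ∈ ↑α \ {α} such that every element of ↑α of rank exactly n lies in U ∪ ↑α₁ ∪ ⋯ ∪ ↑α_k. -/

import Mathlib

open Set Topology

universe v

namespace ISemi

/-- The set of partial injective transformations (partial bijections) of `ι`
with rank (cardinality of the range, equivalently of the domain) at most `n`. -/
def Elem (ι : Type*) (n : ℕ) : Type _ :=
  {f : ι ≃. ι // {a : ι | (f a).isSome}.encard ≤ (n : ℕ∞)}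

variable {ι : Type*} {n : ℕ}

/-- Composition of partial bijections (written multiplicatively). -/
instance : Semigroup (Elem ι n) where
  mul f g := ⟨f.1.trans g.1, by
    refine le_trans (Set.encard_mono ?_) f.2
    intro a ha
    simp only [Set.mem_setOf_eq] at *
    rcases Option.isSome_iff_exists.1 ha with ⟨c, hc⟩
    rcases (PEquiv.trans_eq_some _ _ _ _).1 hc with ⟨b, hb, -⟩
    simp [hb]⟩
  mul_assoc f g h := Subtype.ext (PEquiv.trans_assoc f.1 g.1 h.1)

/-- The inverse partial bijection. -/
def inv (f : Elem ι n) : Elem ι n := ⟨f.1.symm, by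
  have key : ∀ (g : ι ≃. ι), {b : ι | (g.symm b).isSome} ⊆
      (fun p : {a : ι | (g a).isSome} => (g p.1).get p.2) '' Set.univ := by
    intro g b hb
    rcases Option.isSome_iff_exists.1 hb with ⟨a, ha⟩
    have ha' : b ∈ g a := (PEquiv.mem_iff_mem g).1 (Option.mem_def.2 ha)
    simp only [Option.mem_def] at ha'
    refine ⟨⟨a, ?_⟩, Set.mem_univ _, ?_⟩
    · simp [Set.mem_setOf_eq, ha']
    · simp [ha']
  calc {b : ι | (f.1.symm b).isSome}.encard
      ≤ ((fun p : {a : ι | (f.1 a).isSome} => (f.1 p.1).get p.2) '' Set.univ).encard :=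
        Set.encard_mono (key f.1)
    _ ≤ (Set.univ : Set {a : ι | (f.1 a).isSome}).encard := Set.encard_image_le _ _
    _ = {a : ι | (f.1 a).isSome}.encard := by rw [Set.encard_univ, ENat.card_coe_set_eq]
    _ ≤ (n : ℕ∞) := f.2⟩

/-- The zero (the empty partial map). -/
def zero (ι : Type*) (n : ℕ) : Elem ι n := ⟨⊥, by simp [PEquiv.bot_apply]⟩

/-- idempotents -/
def IsIdem (e : Elem ι n) : Prop := e * e = e

/-- The natural partial order on the inverse semigroup `Elem ι n`:
`f ≼ g` iff `f = e * g` for some idempotent `e`. -/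
def nle (f g : Elem ι n) : Prop := ∃ e : Elem ι n, IsIdem e ∧ f = e * g

/-- up-set of `f` w.r.t. the natural partial order -/
def upset (f : Elem ι n) : Set (Elem ι n) := {g | nle f g}

/-- the rank of a partial bijection: the cardinality of its domain (= range) -/
noncomputable def rank (f : Elem ι n) : ℕ∞ := {a : ι | (f.1 a).isSome}.encard

def dom (f : Elem ι n) : Set ι := {a : ι | (f.1 a).isSome}

def ran (f : Elem ι n) : Set ι := {b : ι | (f.1.symm b).isSome}

/-- A topology on `Elem ι n` is shift-continuous if all left and right
translations are continuous. -/
def ShiftContinuous (ι : Type*) (n : ℕ) [TopologicalSpace (Elem ι n)] : Prop :=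
  ∀ a : Elem ι n, Continuous (fun x : Elem ι n => a * x) ∧
    Continuous (fun x : Elem ι n => x * a)

/-- A space is feebly compact if every locally finite family of nonempty open
sets is finite. -/
def FeeblyCompact (X : Type*) [TopologicalSpace X] : Prop :=
  ∀ 𝒰 : Set (Set X), (∀ U ∈ 𝒰, IsOpen U ∧ U.Nonempty) →
    LocallyFinite (fun U : 𝒰 => (U : Set X)) → 𝒰.Finite

/-- A space is `d`-feebly compact if every discrete family of open sets is
finite; a family is discrete if every point has a neighbourhood meeting at
most one member of the family. -/
def DFeeblyCompact (X : Type*) [TopologicalSpace X] : Prop :=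
  ∀ 𝒰 : Set (Set X), (∀ U ∈ 𝒰, IsOpen U) →
    (∀ x : X, ∃ V ∈ 𝓝 x, {U ∈ 𝒰 | (U ∩ V).Nonempty}.Subsingleton) → 𝒰.Finite

/-- countably pracompact: there is a dense set `A` such that every infinite
subset of `A` has an accumulation point in `X`. -/
def CountablyPracompact (X : Type*) [TopologicalSpace X] : Prop :=
  ∃ A : Set X, Dense A ∧ ∀ B ⊆ A, B.Infinite → ∃ x : X, AccPt x (Filter.principal B)

/-- H-closed: closed in every Hausdorff space in which it embeds. -/
def HClosed (X : Type*) [TopologicalSpace X] : Prop :=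
  ∀ (Y : Type v) (_ : TopologicalSpace Y), T2Space Y →
    ∀ e : X → Y, IsEmbedding e → IsClosed (Set.range e)

/-- infra H-closed: every continuous image in a first-countable Hausdorff
space is closed. -/
def InfraHClosed (X : Type*) [TopologicalSpace X] : Prop :=
  ∀ (Y : Type v) (_ : TopologicalSpace Y), T2Space Y →
    FirstCountableTopology Y → ∀ f : X → Y, Continuous f → IsClosed (Set.range f)

/-- `Y`-compactness: every continuous image in `Y` is compact. -/
def YCompact (X : Type*) [TopologicalSpace X] (Y : Type*) [TopologicalSpace Y] : Prop :=
  ∀ f : X → Y, Continuous f → IsCompact (Set.range f)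

/-- scattered: every nonempty subset has a point isolated in it. -/
def Scattered (X : Type*) [TopologicalSpace X] : Prop :=
  ∀ S : Set X, S.Nonempty → ∃ x ∈ S, ∃ U : Set X, IsOpen U ∧ U ∩ S = {x}

/-- semiregular: there is a base consisting of regular open sets. -/
def Semiregular (X : Type*) [TopologicalSpace X] : Prop :=
  ∃ B : Set (Set X), TopologicalSpace.IsTopologicalBasis B ∧
    ∀ U ∈ B, interior (closure U) = U

/-- countably compact: every countable open cover has a finite subcover. -/
def CountablyCompact (X : Type*) [TopologicalSpace X] : Prop :=
  ∀ 𝒰 : Set (Set X), 𝒰.Countable → (∀ U ∈ 𝒰, IsOpen U) → ⋃₀ 𝒰 = Set.univ →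
    ∃ 𝒱 ⊆ 𝒰, 𝒱.Finite ∧ ⋃₀ 𝒱 = Set.univ

end ISemi

/-! If `rank a = n` then `↑a = {a}`. Otherwise, if the claim failed, we could choose inductively
rank-`n` elements `β₀, β₁, …` of `↑a \ U` such that no `γ ∈ ↑a \ {a}` lies below two of them,
because every element has only finitely many restrictions. Each `βᵢ` is isolated, so by feeble
compactness the family `{βᵢ}` is not locally finite: some `x` has infinitely many `βᵢ` in each of
its neighbourhoods. As `↑a` is closed, `x ∈ ↑a`; as `U` misses every `βᵢ`, `x ≠ a`; and the open
neighbourhood `↑x` contains two of the `βᵢ`, so `x` lies below both, a contradiction.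

Up-sets are clopen because `↑β` is the fibre over `β` of the continuous map
`x ↦ (β β⁻¹) x (β⁻¹ β)`, whose values are partial bijections from `dom β` to `ran β`, so it has
finite range. -/

lemma isClopen_preimage_singleton_of_finite_range {X Y : Type*} [TopologicalSpace X]
    [TopologicalSpace Y] [T1Space Y] {f : X → Y} (hf : Continuous f)
    (hfin : (Set.range f).Finite) (y : Y) : IsClopen (f ⁻¹' {y}) := by
  refine ⟨isClosed_singleton.preimage hf, ?_⟩
  rw [← isClosed_compl_iff, ← Set.preimage_compl, ← Set.preimage_inter_range]
  exact ((hfin.subset Set.inter_subset_right).isClosed).preimage hf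

lemma ISemi.FeeblyCompact.exists_forall_mem_nhds_infinite {X κ : Type*} [TopologicalSpace X]
    [Infinite κ] (hX : ISemi.FeeblyCompact X) {β : κ → X} (hinj : Function.Injective β)
    (hβ : ∀ i, IsOpen {β i}) : ∃ x, ∀ t ∈ 𝓝 x, {i | β i ∈ t}.Infinite := by
  by_contra! h
  refine Set.infinite_range_of_injective (Set.singleton_injective.comp hinj) (hX _ ?_ fun x => ?_)
  · rintro _ ⟨i, rfl⟩
    exact ⟨hβ i, Set.singleton_nonempty _⟩
  · obtain ⟨t, ht, hfin⟩ := h x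
    refine ⟨t, ht, (hfin.image fun i => ⟨{β i}, i, rfl⟩).subset ?_⟩
    rintro ⟨_, i, rfl⟩ ⟨_, rfl, hi⟩
    exact ⟨i, hi, rfl⟩

namespace ISemi

variable {ι : Type*} {n : ℕ}

lemma val_mul (f g : Elem ι n) : (f * g).1 = f.1.trans g.1 := rfl

lemma val_inv (f : Elem ι n) : (inv f).1 = f.1.symm := rfl

lemma ext_mem {f g : Elem ι n} (h : ∀ a b, b ∈ f.1 a ↔ b ∈ g.1 a) : f = g :=
  Subtype.ext <| PEquiv.ext fun a => Option.ext (h a)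

lemma mem_mul {f g : Elem ι n} {a b : ι} : b ∈ (f * g).1 a ↔ ∃ c, c ∈ f.1 a ∧ b ∈ g.1 c :=
  PEquiv.mem_trans _ _ _ _

lemma mem_dom {f : Elem ι n} {a : ι} : a ∈ dom f ↔ ∃ b, b ∈ f.1 a :=
  Option.isSome_iff_exists

lemma mem_ran {f : Elem ι n} {b : ι} : b ∈ ran f ↔ ∃ a, b ∈ f.1 a :=
  Option.isSome_iff_exists.trans (exists_congr fun _ => PEquiv.mem_iff_mem f.1)

lemma dom_finite (f : Elem ι n) : (dom f).Finite := Set.finite_of_encard_le_coe f.2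

lemma ran_finite (f : Elem ι n) : (ran f).Finite := dom_finite (inv f)

lemma mem_mul_inv_self {f : Elem ι n} {a b : ι} : b ∈ (f * inv f).1 a ↔ b = a ∧ a ∈ dom f := by
  rw [val_mul, val_inv, PEquiv.self_trans_symm, PEquiv.mem_ofSet_iff]
  exact and_congr_right fun h => h ▸ Iff.rfl

lemma mem_inv_mul_self {f : Elem ι n} {a b : ι} : b ∈ (inv f * f).1 a ↔ b = a ∧ a ∈ ran f := by
  rw [val_mul, val_inv, PEquiv.symm_trans_self, PEquiv.mem_ofSet_iff]
  exact and_congr_right fun h => h ▸ Iff.rfl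

lemma IsIdem.eq_of_mem {e : Elem ι n} (he : IsIdem e) {a b : ι} (hab : b ∈ e.1 a) : b = a := by
  obtain ⟨c, hac, hcb⟩ := mem_mul.1 (he.symm ▸ hab : b ∈ (e * e).1 a)
  obtain rfl : c = b := Option.mem_unique hac hab
  exact PEquiv.inj e.1 hcb hab

lemma isIdem_mul_inv_self (f : Elem ι n) : IsIdem (f * inv f) :=
  ext_mem fun a b => by
    rw [mem_mul]
    simp only [mem_mul_inv_self]
    constructor
    · rintro ⟨c, ⟨rfl, ha⟩, rfl, -⟩
      exact ⟨rfl, ha⟩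
    · rintro ⟨rfl, ha⟩
      exact ⟨b, ⟨rfl, ha⟩, rfl, ha⟩

lemma nle_iff_le {f g : Elem ι n} : nle f g ↔ f.1 ≤ g.1 := by
  constructor
  · rintro ⟨e, he, rfl⟩ a b hab
    obtain ⟨c, hac, hcb⟩ := mem_mul.1 hab
    rwa [he.eq_of_mem hac] at hcb
  · intro hfg
    refine ⟨f * inv f, isIdem_mul_inv_self f, ext_mem fun a b => ?_⟩
    rw [mem_mul]
    simp only [mem_mul_inv_self]
    constructor
    · intro hab
      exact ⟨a, ⟨rfl, mem_dom.2 ⟨b, hab⟩⟩, hfg a b hab⟩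
    · rintro ⟨c, ⟨rfl, hc⟩, hcb⟩
      obtain ⟨d, hd⟩ := mem_dom.1 hc
      rwa [Option.mem_unique hcb (hfg _ d hd)]

lemma nle_refl (f : Elem ι n) : nle f f := nle_iff_le.2 le_rfl

def graph (f : Elem ι n) : Set (ι × ι) := {p | p.2 ∈ f.1 p.1}

lemma graph_injective : Function.Injective (graph : Elem ι n → Set (ι × ι)) :=
  fun _ _ h => ext_mem fun a b => Set.ext_iff.1 h (a, b)

lemma graph_subset_graph_iff {f g : Elem ι n} : graph f ⊆ graph g ↔ f.1 ≤ g.1 :=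
  ⟨fun h a b hab => @h (a, b) hab, fun h _ hp => h _ _ hp⟩

lemma graph_subset_dom_prod_ran (f : Elem ι n) : graph f ⊆ dom f ×ˢ ran f :=
  fun p hp => ⟨mem_dom.2 ⟨p.2, hp⟩, mem_ran.2 ⟨p.1, hp⟩⟩

lemma finite_setOf_graph_subset {S : Set (ι × ι)} (hS : S.Finite) :
    {f : Elem ι n | graph f ⊆ S}.Finite :=
  hS.finite_subsets.preimage graph_injective.injOn

lemma finite_setOf_nle (β : Elem ι n) : {γ | nle γ β}.Finite :=
  (finite_setOf_graph_subset ((dom_finite β).prod (ran_finite β))).subset fun _ hγ =>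
    (graph_subset_graph_iff.2 (nle_iff_le.1 hγ)).trans (graph_subset_dom_prod_ran β)

lemma upset_eq_singleton_of_rank_eq {β : Elem ι n} (h : rank β = n) : upset β = {β} := by
  refine Set.eq_singleton_iff_unique_mem.2 ⟨nle_refl β, fun g hg => ?_⟩
  have hle := nle_iff_le.1 hg
  have hdom : dom β = dom g :=
    (dom_finite β).eq_of_subset_of_encard_le
      (fun a ha => mem_dom.2 <| (mem_dom.1 ha).imp fun b => hle a b) (g.2.trans h.ge)
  refine (ext_mem fun a b => ⟨hle a b, fun hb => ?_⟩).symm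
  obtain ⟨c, hc⟩ := mem_dom.1 (hdom ▸ mem_dom.2 ⟨b, hb⟩ : a ∈ dom β)
  rwa [Option.mem_unique hb (hle a c hc)]

def sandwich (β x : Elem ι n) : Elem ι n := β * inv β * x * (inv β * β)

lemma mem_sandwich {β x : Elem ι n} {a b : ι} :
    b ∈ (sandwich β x).1 a ↔ a ∈ dom β ∧ b ∈ ran β ∧ b ∈ x.1 a := by
  simp only [sandwich, mem_mul (f := β * inv β * x), mem_mul (f := β * inv β), mem_mul_inv_self,
    mem_inv_mul_self]
  constructor
  · rintro ⟨c, ⟨d, ⟨rfl, ha⟩, hc⟩, rfl, hb⟩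
    exact ⟨ha, hb, hc⟩
  · rintro ⟨ha, hb, hab⟩
    exact ⟨b, ⟨a, ⟨rfl, ha⟩, hab⟩, rfl, hb⟩

lemma graph_sandwich_subset (β x : Elem ι n) : graph (sandwich β x) ⊆ dom β ×ˢ ran β :=
  fun _ hp => ⟨(mem_sandwich.1 hp).1, (mem_sandwich.1 hp).2.1⟩

lemma finite_range_sandwich (β : Elem ι n) : (Set.range (sandwich β)).Finite :=
  (finite_setOf_graph_subset ((dom_finite β).prod (ran_finite β))).subset
    (Set.range_subset_iff.2 (graph_sandwich_subset β))

lemma upset_eq_preimage_sandwich (β : Elem ι n) : upset β = sandwich β ⁻¹' {β} := by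
  ext x
  refine ⟨fun hx => ext_mem fun a b => ?_, fun hx => nle_iff_le.2 fun a b hab => ?_⟩
  · rw [mem_sandwich]
    have hle := nle_iff_le.1 hx
    refine ⟨fun ⟨ha, _, hab⟩ => ?_,
      fun hab => ⟨mem_dom.2 ⟨b, hab⟩, mem_ran.2 ⟨a, hab⟩, hle a b hab⟩⟩
    obtain ⟨c, hc⟩ := mem_dom.1 ha
    rwa [Option.mem_unique hab (hle a c hc)]
  · rw [← hx] at hab
    exact (mem_sandwich.1 hab).2.2

lemma exists_seq_not_nle_of_forall_finset {D : Set (Elem ι n)} {P : Elem ι n → Prop}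
    (h : ∀ F : Finset (Elem ι n), ↑F ⊆ D → ∃ g, P g ∧ g ∉ ⋃ b ∈ F, upset b) :
    ∃ β : ℕ → Elem ι n, (∀ i, P (β i)) ∧
      ∀ i j, i < j → ∀ γ ∈ D, nle γ (β i) → ¬ nle γ (β j) := by
  refine exists_seq_of_forall_finset_exists P (fun x y => ∀ γ ∈ D, nle γ x → ¬ nle γ y)
    fun s _ => ?_
  have hfin : {γ | γ ∈ D ∧ ∃ x ∈ s, nle γ x}.Finite :=
    (s.finite_toSet.biUnion fun x _ => finite_setOf_nle x).subset
      fun γ ⟨_, x, hx, hγx⟩ => Set.mem_biUnion hx hγx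
  obtain ⟨g, hg, hgF⟩ := h hfin.toFinset fun γ hγ => (hfin.mem_toFinset.1 hγ).1
  refine ⟨g, hg, fun x hx γ hγ hγx hγg => hgF ?_⟩
  exact Set.mem_biUnion (hfin.mem_toFinset.2 ⟨hγ, x, hx, hγx⟩) hγg

section Topology

variable [TopologicalSpace (Elem ι n)]

lemma continuous_sandwich (hshift : ShiftContinuous ι n) (β : Elem ι n) :
    Continuous (sandwich β) :=
  (hshift _).2.comp (hshift _).1

variable [T1Space (Elem ι n)]

lemma isClopen_upset (hshift : ShiftContinuous ι n) (β : Elem ι n) : IsClopen (upset β) := by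
  rw [upset_eq_preimage_sandwich]
  exact isClopen_preimage_singleton_of_finite_range (continuous_sandwich hshift β)
    (finite_range_sandwich β) β

lemma exists_common_lower_bound_of_seq (hshift : ShiftContinuous ι n)
    (hfc : FeeblyCompact (Elem ι n)) {a : Elem ι n} {U : Set (Elem ι n)} (haU : a ∈ U)
    (hU : IsOpen U) {β : ℕ → Elem ι n} (hinj : Function.Injective β)
    (hβ : ∀ i, β i ∈ upset a ∧ rank (β i) = n ∧ β i ∉ U) :
    ∃ x ∈ upset a \ {a}, ∃ i j, i < j ∧ nle x (β i) ∧ nle x (β j) := by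
  obtain ⟨x, hx⟩ := hfc.exists_forall_mem_nhds_infinite hinj fun i => by
    rw [← upset_eq_singleton_of_rank_eq (hβ i).2.1]
    exact (isClopen_upset hshift _).isOpen
  have hxa : x ∈ upset a := (isClopen_upset hshift a).isClosed.closure_subset <|
    mem_closure_iff_nhds.2 fun t ht =>
      let ⟨i, hi⟩ := (hx t ht).nonempty
      ⟨β i, hi, (hβ i).1⟩
  have hxne : x ≠ a := by
    rintro rfl
    obtain ⟨i, hi⟩ := (hx U (hU.mem_nhds haU)).nonempty
    exact (hβ i).2.2 hi
  obtain ⟨i, hi, j, hj, hij⟩ :=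
    (hx _ ((isClopen_upset hshift x).isOpen.mem_nhds (nle_refl x))).nontrivial
  rcases hij.lt_or_gt with h | h
  · exact ⟨x, ⟨hxa, hxne⟩, i, j, h, hi, hj⟩
  · exact ⟨x, ⟨hxa, hxne⟩, j, i, h, hj, hi⟩

end Topology

end ISemi

theorem stmt18_general (ι : Type*) (n : ℕ)
    [TopologicalSpace (ISemi.Elem ι n)] [T1Space (ISemi.Elem ι n)]
    (hshift : ISemi.ShiftContinuous ι n)
    (hfc : ISemi.FeeblyCompact (ISemi.Elem ι n))
    (a : ISemi.Elem ι n) (U : Set (ISemi.Elem ι n)) (haU : a ∈ U) (hU : IsOpen U) :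
    ∃ F : Finset (ISemi.Elem ι n), ↑F ⊆ ISemi.upset a \ {a} ∧
      ∀ g ∈ ISemi.upset a, ISemi.rank g = (n : ℕ∞) →
        g ∈ U ∪ ⋃ b ∈ F, ISemi.upset b := by
  open ISemi in
  by_cases ha : rank a = n
  · refine ⟨∅, by simp, fun g hg _ => Or.inl ?_⟩
    rw [upset_eq_singleton_of_rank_eq ha] at hg
    exact hg ▸ haU
  by_contra! hfail
  obtain ⟨β, hβ, hsep⟩ := exists_seq_not_nle_of_forall_finset
    (P := fun g => g ∈ upset a ∧ rank g = n ∧ g ∉ U) fun F hF => by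
      obtain ⟨g, hga, hgn, hg⟩ := hfail F hF
      rw [Set.mem_union, not_or] at hg
      exact ⟨g, ⟨hga, hgn, hg.1⟩, hg.2⟩
  have hinj : Function.Injective β := .of_lt_imp_ne fun i j hij h =>
    hsep i j hij (β i) ⟨(hβ i).1, fun h' => ha (h' ▸ (hβ i).2.1)⟩ (nle_refl _) (h ▸ nle_refl _)
  obtain ⟨x, hx, i, j, hij, hi, hj⟩ :=
    exists_common_lower_bound_of_seq hshift hfc haU hU hinj hβ
  exact hsep i j hij x hx hi hj

theorem stmt18 (ι : Type*) [Infinite ι] (n : ℕ) (hn : 0 < n)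
    [TopologicalSpace (ISemi.Elem ι n)] [T1Space (ISemi.Elem ι n)]
    (hshift : ISemi.ShiftContinuous ι n)
    (hfc : ISemi.FeeblyCompact (ISemi.Elem ι n))
    (a : ISemi.Elem ι n) (U : Set (ISemi.Elem ι n)) (haU : a ∈ U) (hU : IsOpen U) :
    ∃ F : Finset (ISemi.Elem ι n), ↑F ⊆ ISemi.upset a \ {a} ∧
      ∀ g ∈ ISemi.upset a, ISemi.rank g = (n : ℕ∞) →
        g ∈ U ∪ ⋃ b ∈ F, ISemi.upset b :=
  stmt18_general ι n hshift hfc a U haU hU
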